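/- Let V be a ℂ-vector space and let e_i, f_i, H_i (1 ≤ i ≤ m−1) be linear endomorphisms of V satisfying the Serre relations of sl_m: [H_i, H_j] = 0, [H_j, e_i] = a_{ji}·e_i, [H_j, f_i] = −a_{ji}·f_i, [e_i, f_j] = δ_{ij}·H_i, [e_i, e_j] = [f_i, f_j] = 0 whenever j ≠ i+1 and j ≠ i−1, and [e_i, [e_i, e_{i±1}]] = [f_i, [f_i, f_{i±1}]] = 0. Fix γ ∈ ℂ, and define X⁺_{i,t} := (1 − Q_i·γ)·γ^t·e_i, X⁻_{i,t} := γ^t·f_i, and J_{i,t} := γ^t·H_i for 1 ≤ i ≤ m−1 and t ∈ ℕ. Then the family X⁺_{i,t}, X⁻_{i,t}, J_{i,t} is a Q-deformed sl_m-current representation on V, i.e., it satisfies relations (L1)–(L6). -/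

import Mathlib

/-!
Every operator of the family is a scalar multiple of `e i`, `f i` or `H i`, and commutators are
bilinear, so each relation (L1)–(L6) is the matching `sl_m` relation multiplied by a scalar
(in (L5) both sides are the same multiple of `[e i, e j]`). The factor `1 - Q i * γ` in `X⁺` is
what makes `[X⁺_{i,t}, X⁻_{i,s}] = γ^(s+t) (1 - Q i γ) H i = J_{i,s+t} - Q i J_{i,s+t+1}`.
-/

open Finset

/-- The Cartan integers `a_{ji}` of `sl_m`: `2` if `j = i`, `−1` if `|j − i| = 1`, `0` otherwise. -/
def cartan {m : ℕ} (j i : Fin (m - 1)) : ℂ :=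
  if j = i then 2
  else if (j : ℕ) = (i : ℕ) + 1 ∨ (i : ℕ) = (j : ℕ) + 1 then -1 else 0

/-- A `Q`-deformed `sl_m`-current representation on a `ℂ`-vector space `V`:
the relations (L1)–(L6). -/
def IsSlmCurrentRep (m : ℕ) (Q : Fin (m - 1) → ℂ) {V : Type*} [AddCommGroup V] [Module ℂ V]
    (Xp Xm J : Fin (m - 1) → ℕ → Module.End ℂ V) : Prop :=
  (∀ (i j : Fin (m - 1)) (s t : ℕ), J i s * J j t = J j t * J i s) ∧
  (∀ (i j : Fin (m - 1)) (s t : ℕ),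
      J j s * Xp i t - Xp i t * J j s = cartan j i • Xp i (s + t)) ∧
  (∀ (i j : Fin (m - 1)) (s t : ℕ),
      J j s * Xm i t - Xm i t * J j s = -(cartan j i • Xm i (s + t))) ∧
  (∀ (i j : Fin (m - 1)) (s t : ℕ), Xp i t * Xm j s - Xm j s * Xp i t =
      if i = j then J i (s + t) - Q i • J i (s + t + 1) else 0) ∧
  (∀ (i j : Fin (m - 1)) (s t : ℕ), ¬((j : ℕ) = (i : ℕ) + 1 ∨ (i : ℕ) = (j : ℕ) + 1) →
      Xp i t * Xp j s = Xp j s * Xp i t ∧ Xm i t * Xm j s = Xm j s * Xm i t) ∧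
  (∀ (i j : Fin (m - 1)) (s t : ℕ), ((j : ℕ) = (i : ℕ) + 1 ∨ (i : ℕ) = (j : ℕ) + 1) →
      (Xp i (t + 1) * Xp j s - Xp j s * Xp i (t + 1) =
        Xp i t * Xp j (s + 1) - Xp j (s + 1) * Xp i t) ∧
      (Xm i (t + 1) * Xm j s - Xm j s * Xm i (t + 1) =
        Xm i t * Xm j (s + 1) - Xm j (s + 1) * Xm i t)) ∧
  (∀ (i j : Fin (m - 1)) (s t u : ℕ), ((j : ℕ) = (i : ℕ) + 1 ∨ (i : ℕ) = (j : ℕ) + 1) →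
      Xp i s * (Xp i t * Xp j u - Xp j u * Xp i t) -
          (Xp i t * Xp j u - Xp j u * Xp i t) * Xp i s = 0 ∧
      Xm i s * (Xm i t * Xm j u - Xm j u * Xm i t) -
          (Xm i t * Xm j u - Xm j u * Xm i t) * Xm i s = 0)

section ScaledCommutator

variable {R A : Type*} [CommSemiring R] [Ring A] [Algebra R A]

theorem smul_commutator_smul (a b : R) (x y : A) :
    a • x * b • y - b • y * a • x = (a * b) • (x * y - y * x) := by
  rw [smul_mul_smul_comm, smul_mul_smul_comm, mul_comm b a, smul_sub]

theorem smul_commutator_smul_commutator (a b c : R) (x y z : A) :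
    a • x * (b • y * c • z - c • z * b • y) - (b • y * c • z - c • z * b • y) * a • x =
      (a * b * c) • (x * (y * z - z * y) - (y * z - z * y) * x) := by
  rw [smul_commutator_smul b c, smul_commutator_smul, mul_assoc]

theorem smul_mul_smul_eq_of_commute {x y : A} (h : Commute x y) (a b : R) :
    a • x * b • y = b • y * a • x :=
  (h.smul_left a).smul_right b

end ScaledCommutator

theorem stmt17_general {m : ℕ} (Q : Fin (m - 1) → ℂ)
    {V : Type*} [AddCommGroup V] [Module ℂ V]
    (e f H : Fin (m - 1) → Module.End ℂ V)
    (hHH : ∀ i j : Fin (m - 1), H i * H j = H j * H i)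
    (hHe : ∀ i j : Fin (m - 1), H j * e i - e i * H j = cartan j i • e i)
    (hHf : ∀ i j : Fin (m - 1), H j * f i - f i * H j = -(cartan j i • f i))
    (hef : ∀ i j : Fin (m - 1), e i * f j - f j * e i = if i = j then H i else 0)
    (hee : ∀ i j : Fin (m - 1), ¬((j : ℕ) = (i : ℕ) + 1 ∨ (i : ℕ) = (j : ℕ) + 1) →
      e i * e j = e j * e i ∧ f i * f j = f j * f i)
    (hSerre : ∀ i j : Fin (m - 1), ((j : ℕ) = (i : ℕ) + 1 ∨ (i : ℕ) = (j : ℕ) + 1) →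
      e i * (e i * e j - e j * e i) - (e i * e j - e j * e i) * e i = 0 ∧
      f i * (f i * f j - f j * f i) - (f i * f j - f j * f i) * f i = 0)
    (γ : ℂ) :
    IsSlmCurrentRep m Q
      (fun i t => ((1 - Q i * γ) * γ ^ t) • e i)
      (fun i t => (γ ^ t) • f i)
      (fun i t => (γ ^ t) • H i) := by
  refine ⟨fun i j s t => ?_, fun i j s t => ?_, fun i j s t => ?_, fun i j s t => ?_,
    fun i j s t hij => ?_, fun i j s t _ => ?_, fun i j s t u hij => ?_⟩
  · exact smul_mul_smul_eq_of_commute (hHH i j) _ _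
  · rw [smul_commutator_smul, hHe]
    module
  · rw [smul_commutator_smul, hHf]
    module
  · rw [smul_commutator_smul, hef]
    split_ifs with h
    · subst h
      module
    · exact smul_zero _
  · obtain ⟨he, hf⟩ := hee i j hij
    exact ⟨smul_mul_smul_eq_of_commute he _ _, smul_mul_smul_eq_of_commute hf _ _⟩
  · simp only [smul_commutator_smul]
    constructor <;> congr 1 <;> ring
  · obtain ⟨he, hf⟩ := hSerre i j hij
    simp only [smul_commutator_smul_commutator, he, hf, smul_zero, and_self]

theorem stmt17 {m : ℕ} (hm : 2 ≤ m) (Q : Fin (m - 1) → ℂ)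
    {V : Type*} [AddCommGroup V] [Module ℂ V]
    (e f H : Fin (m - 1) → Module.End ℂ V)
    (hHH : ∀ i j : Fin (m - 1), H i * H j = H j * H i)
    (hHe : ∀ i j : Fin (m - 1), H j * e i - e i * H j = cartan j i • e i)
    (hHf : ∀ i j : Fin (m - 1), H j * f i - f i * H j = -(cartan j i • f i))
    (hef : ∀ i j : Fin (m - 1), e i * f j - f j * e i = if i = j then H i else 0)
    (hee : ∀ i j : Fin (m - 1), ¬((j : ℕ) = (i : ℕ) + 1 ∨ (i : ℕ) = (j : ℕ) + 1) →
      e i * e j = e j * e i ∧ f i * f j = f j * f i)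
    (hSerre : ∀ i j : Fin (m - 1), ((j : ℕ) = (i : ℕ) + 1 ∨ (i : ℕ) = (j : ℕ) + 1) →
      e i * (e i * e j - e j * e i) - (e i * e j - e j * e i) * e i = 0 ∧
      f i * (f i * f j - f j * f i) - (f i * f j - f j * f i) * f i = 0)
    (γ : ℂ) :
    IsSlmCurrentRep m Q
      (fun i t => ((1 - Q i * γ) * γ ^ t) • e i)
      (fun i t => (γ ^ t) • f i)
      (fun i t => (γ ^ t) • H i) :=
  stmt17_general Q e f H hHH hHe hHf hef hee hSerre γ
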